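/- arXiv:1501.01708 — 8 statements merged into one kernel-verified Lean document; each statement's English description precedes it below -/
import Mathlib

section
/- Let s be a positive integer, A ∈ ℝ^{m×N} a matrix, x ∈ ℝ^N a vector, k ∈ {1,…,N}, and let t = −(√(s+1) − 1)/√s. Then t² < 1 and ‖A(x + t e_k)‖₂² − ‖A(t² x − t e_k)‖₂² = (1 − t⁴)·(⟨Ax, Ax⟩ − √s·⟨Ax, A e_k⟩). -/
/-!
With `a = √s`, the number `-t = a / (√(a² + 1) + 1)` is `tan (arctan a / 2)`, so the double-angle
formula gives `2t = -a (1 - t²)`. Expanding both squared norms, the difference is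
`(1 - t⁴)‖Ax‖² + 2t(1 + t²)⟨Ax, Ae_k⟩`, and the double-angle formula turns the second coefficient
into `-(1 - t⁴)√s`.
-/

open Matrix

/-- `tan (arctan a / 2)`, written without trigonometry. -/
noncomputable def tanHalfArctan (a : ℝ) : ℝ := a / (√(a ^ 2 + 1) + 1)

lemma sq_tanHalfArctan_lt_one (a : ℝ) : tanHalfArctan a ^ 2 < 1 := by
  have hb := Real.sq_sqrt (by positivity : 0 ≤ a ^ 2 + 1)
  have hb0 := Real.sqrt_nonneg (a ^ 2 + 1)
  rw [tanHalfArctan, div_pow, div_lt_one (by positivity)]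
  nlinarith

lemma two_mul_tanHalfArctan (a : ℝ) :
    2 * tanHalfArctan a = a * (1 - tanHalfArctan a ^ 2) := by
  have hb := Real.sq_sqrt (by positivity : 0 ≤ a ^ 2 + 1)
  rw [tanHalfArctan]
  field_simp
  linear_combination (-a) * hb

/-- At `s = 0` both sides vanish, the right one because `x / 0 = 0`. -/
lemma tanHalfArctan_sqrt {s : ℝ} (hs : 0 ≤ s) :
    tanHalfArctan √s = (√(s + 1) - 1) / √s := by
  rcases hs.eq_or_lt with rfl | hs
  · simp [tanHalfArctan]
  rw [tanHalfArctan, Real.sq_sqrt hs.le, div_eq_div_iff (by positivity) (Real.sqrt_pos.2 hs).ne']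
  linear_combination Real.sq_sqrt hs.le - Real.sq_sqrt (by positivity : 0 ≤ s + 1)

lemma dotProduct_add_smul_self_sub_sq_smul_sub_smul_self {n R : Type*} [Fintype n] [CommRing R]
    (u v : n → R) (t : R) :
    (u + t • v) ⬝ᵥ (u + t • v) - (t ^ 2 • u - t • v) ⬝ᵥ (t ^ 2 • u - t • v)
      = (1 - t ^ 4) * (u ⬝ᵥ u) + 2 * t * (1 + t ^ 2) * (u ⬝ᵥ v) := by
  simp only [dotProduct_add, add_dotProduct, dotProduct_sub, sub_dotProduct,
    dotProduct_smul, smul_dotProduct, smul_eq_mul, dotProduct_comm v u]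
  ring

theorem omp_lemma1_minus_general (s m N : ℕ)
    (A : Matrix (Fin m) (Fin N) ℝ) (x : Fin N → ℝ) (k : Fin N)
    (t : ℝ) (ht : t = -((Real.sqrt ((s : ℝ) + 1) - 1) / Real.sqrt (s : ℝ))) :
    t ^ 2 < 1 ∧
    (A *ᵥ (x + t • (Pi.single k 1 : Fin N → ℝ))) ⬝ᵥ (A *ᵥ (x + t • (Pi.single k 1 : Fin N → ℝ)))
      - (A *ᵥ (t ^ 2 • x - t • (Pi.single k 1 : Fin N → ℝ))) ⬝ᵥ
          (A *ᵥ (t ^ 2 • x - t • (Pi.single k 1 : Fin N → ℝ)))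
    = (1 - t ^ 4) *
        ((A *ᵥ x) ⬝ᵥ (A *ᵥ x)
          - Real.sqrt (s : ℝ) * ((A *ᵥ x) ⬝ᵥ (A *ᵥ (Pi.single k 1 : Fin N → ℝ)))) := by
  rw [← tanHalfArctan_sqrt s.cast_nonneg] at ht
  have hsq : t ^ 2 < 1 := by simpa [ht] using sq_tanHalfArctan_lt_one √(s : ℝ)
  have hdouble : 2 * t = -√(s : ℝ) * (1 - t ^ 2) := by
    rw [ht, neg_sq]
    linear_combination -two_mul_tanHalfArctan √(s : ℝ)
  refine ⟨hsq, ?_⟩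
  simp only [mulVec_add, mulVec_sub, mulVec_smul]
  rw [dotProduct_add_smul_self_sub_sq_smul_sub_smul_self]
  linear_combination (1 + t ^ 2) * ((A *ᵥ x) ⬝ᵥ (A *ᵥ Pi.single k 1)) * hdouble

/-- For a positive integer `s`, a matrix `A ∈ ℝ^{m×N}`, a vector `x ∈ ℝ^N`,
an index `k`, and `t = −(√(s+1) − 1)/√s`, we have `t² < 1` and
`‖A(x + t e_k)‖₂² − ‖A(t² x − t e_k)‖₂² = (1 − t⁴)(⟨Ax, Ax⟩ − √s ⟨Ax, A e_k⟩)`. -/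
theorem omp_lemma1_minus (s m N : ℕ) (hs : 0 < s)
    (A : Matrix (Fin m) (Fin N) ℝ) (x : Fin N → ℝ) (k : Fin N)
    (t : ℝ) (ht : t = -((Real.sqrt ((s : ℝ) + 1) - 1) / Real.sqrt (s : ℝ))) :
    t ^ 2 < 1 ∧
    (A *ᵥ (x + t • (Pi.single k 1 : Fin N → ℝ))) ⬝ᵥ (A *ᵥ (x + t • (Pi.single k 1 : Fin N → ℝ)))
      - (A *ᵥ (t ^ 2 • x - t • (Pi.single k 1 : Fin N → ℝ))) ⬝ᵥ
          (A *ᵥ (t ^ 2 • x - t • (Pi.single k 1 : Fin N → ℝ)))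
    = (1 - t ^ 4) *
        ((A *ᵥ x) ⬝ᵥ (A *ᵥ x)
          - Real.sqrt (s : ℝ) * ((A *ᵥ x) ⬝ᵥ (A *ᵥ (Pi.single k 1 : Fin N → ℝ)))) :=
  omp_lemma1_minus_general s m N A x k t ht
end

section
/- Let s be a positive integer, let A ∈ ℝ^{m×N} satisfy the restricted isometry property of order s+1 with constant δ, let x ∈ ℝ^N satisfy ‖x‖₂ = 1 and have at most s nonzero entries, let k ∉ supp(x), and let t = −(√(s+1) − 1)/√s. Then ‖A(x + t e_k)‖₂² − ‖A(t² x − t e_k)‖₂² ≥ (1 + t²)² · (1/√(s+1) − δ). -/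
/-! The vectors `x + t e_k` and `t² x - t e_k` are `(s+1)`-sparse with squared norms `1 + t²` and
`t² (1 + t²)`, so the lower RIP bound for the first and the upper one for the second give
`(1 - δ)(1 + t²) - (1 + δ) t² (1 + t²)`. The choice of `t` makes `t² = (√(s+1) - 1)/(√(s+1) + 1)`,
i.e. `(1 + t²)/√(s+1) = 1 - t²`, which turns this into the claimed bound. -/

open Matrix

section SparseVectors

variable {ι R : Type*} [DecidableEq ι] [CommSemiring R]

lemma ncard_support_smul_add_smul_single_le [Finite ι] (x : ι → R) (a b : R) (k : ι) :
    (Function.support (a • x + b • Pi.single k 1)).ncard ≤ (Function.support x).ncard + 1 := by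
  have hsub : Function.support (a • x + b • Pi.single k 1) ⊆ Function.support x ∪ {k} :=
    (Function.support_add _ _).trans <| Set.union_subset_union
      (Function.support_const_smul_subset a x)
      ((Function.support_const_smul_subset b _).trans Pi.support_single_subset)
  calc (Function.support (a • x + b • Pi.single k 1)).ncard
      ≤ (Function.support x ∪ {k}).ncard := Set.ncard_le_ncard hsub
    _ ≤ (Function.support x).ncard + 1 := by
      simpa only [Set.ncard_singleton] using Set.ncard_union_le (Function.support x) {k}

lemma dotProduct_smul_add_smul_single_self [Fintype ι] {x : ι → R} {k : ι} (hxk : x k = 0)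
    (a b : R) :
    (a • x + b • Pi.single k 1) ⬝ᵥ (a • x + b • Pi.single k 1) = a ^ 2 * (x ⬝ᵥ x) + b ^ 2 := by
  simp only [dotProduct_add, add_dotProduct, dotProduct_smul, smul_dotProduct, dotProduct_single,
    single_dotProduct, hxk, smul_eq_mul, Pi.add_apply, Pi.smul_apply, Pi.single_eq_same]
  ring

end SparseVectors

-- With `a = √(s+1)`, `s = a² - 1 = (a - 1)(a + 1)`.
lemma sq_eq_sqrt_sub_one_div_sqrt_add_one {s t : ℝ} (hs : 0 < s)
    (ht : t = -((Real.sqrt (s + 1) - 1) / Real.sqrt s)) :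
    t ^ 2 = (Real.sqrt (s + 1) - 1) / (Real.sqrt (s + 1) + 1) := by
  have ha : Real.sqrt (s + 1) ^ 2 = s + 1 := Real.sq_sqrt (by linarith)
  have hapos : 0 < Real.sqrt (s + 1) := Real.sqrt_pos.2 (by linarith)
  rw [ht, neg_sq, div_pow, Real.sq_sqrt hs.le]
  field_simp
  nlinarith

lemma one_add_sq_div_sqrt_eq_one_sub_sq {s t : ℝ} (hs : 0 < s)
    (ht : t = -((Real.sqrt (s + 1) - 1) / Real.sqrt s)) :
    (1 + t ^ 2) / Real.sqrt (s + 1) = 1 - t ^ 2 := by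
  have hapos : 0 < Real.sqrt (s + 1) := Real.sqrt_pos.2 (by linarith)
  rw [sq_eq_sqrt_sub_one_div_sqrt_add_one hs ht]
  field_simp
  ring

/-- If `A` satisfies the RIP of order `s+1` with constant `δ`, `x` is a unit-norm
vector with at most `s` nonzero entries, `k ∉ supp(x)`, and `t = −(√(s+1) − 1)/√s`, then
`‖A(x + t e_k)‖₂² − ‖A(t² x − t e_k)‖₂² ≥ (1 + t²)² (1/√(s+1) − δ)`. -/
theorem omp_lemma2_key_bound (s m N : ℕ) (hs : 0 < s)
    (A : Matrix (Fin m) (Fin N) ℝ) (δ : ℝ)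
    (hRIP : ∀ y : Fin N → ℝ, (Function.support y).ncard ≤ s + 1 →
      (1 - δ) * (y ⬝ᵥ y) ≤ (A *ᵥ y) ⬝ᵥ (A *ᵥ y) ∧
        (A *ᵥ y) ⬝ᵥ (A *ᵥ y) ≤ (1 + δ) * (y ⬝ᵥ y))
    (x : Fin N → ℝ) (hxnorm : x ⬝ᵥ x = 1)
    (hxsupp : (Function.support x).ncard ≤ s)
    (k : Fin N) (hk : k ∉ Function.support x)
    (t : ℝ) (ht : t = -((Real.sqrt ((s : ℝ) + 1) - 1) / Real.sqrt (s : ℝ))) :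
    (A *ᵥ (x + t • (Pi.single k 1 : Fin N → ℝ))) ⬝ᵥ (A *ᵥ (x + t • (Pi.single k 1 : Fin N → ℝ)))
      - (A *ᵥ (t ^ 2 • x - t • (Pi.single k 1 : Fin N → ℝ))) ⬝ᵥ
          (A *ᵥ (t ^ 2 • x - t • (Pi.single k 1 : Fin N → ℝ)))
    ≥ (1 + t ^ 2) ^ 2 * (1 / Real.sqrt ((s : ℝ) + 1) - δ) := by
  have hxk : x k = 0 := Function.notMem_support.mp hk
  have hsupp (a b : ℝ) : (Function.support (a • x + b • Pi.single k 1)).ncard ≤ s + 1 :=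
    (ncard_support_smul_add_smul_single_le x a b k).trans (by omega)
  obtain ⟨hlower, -⟩ := hRIP _ (hsupp 1 t)
  obtain ⟨-, hupper⟩ := hRIP _ (hsupp (t ^ 2) (-t))
  rw [dotProduct_smul_add_smul_single_self hxk, hxnorm, one_smul] at hlower
  rw [dotProduct_smul_add_smul_single_self hxk, hxnorm] at hupper
  rw [sub_eq_add_neg (t ^ 2 • x), ← neg_smul]
  calc (1 + t ^ 2) ^ 2 * (1 / Real.sqrt ((s : ℝ) + 1) - δ)
      = (1 + t ^ 2) * ((1 + t ^ 2) / Real.sqrt ((s : ℝ) + 1)) - (1 + t ^ 2) ^ 2 * δ := by ring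
    _ = (1 - δ) * (1 + t ^ 2) - (1 + δ) * (t ^ 2 * (1 + t ^ 2)) := by
      rw [one_add_sq_div_sqrt_eq_one_sub_sq (by exact_mod_cast hs) ht]; ring
    _ ≤ _ := by linarith
end

section
/- Let s be a positive integer and suppose A ∈ ℝ^{m×N} satisfies the restricted isometry property of order s+1 with some constant δ < 1/√(s+1). If x ∈ ℝ^N has support that is a nonempty subset of {1, 2, …, s}, then max_{k ∈ {1,…,s}} |⟨Ax, A e_k⟩| > |⟨Ax, A e_j⟩| for every index j > s. -/
/-!
Put `r = ‖x‖²`, `P = ‖Ax‖²` and `b = ⟨Ax, Ae_j⟩`. The RIP on the line `t ↦ t x + e_j` makes two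
quadratics in `t` nonnegative; adding their discriminant inequalities, weighted by each other's
leading coefficients, gives the sharpened bound `r b² ≤ (P - (1 - δ) r)((1 + δ) r - P)`, i.e.
`r b² ≤ δ² r² - (P - r)²`. If `|b|` dominated every `|⟨Ax, Ae_k⟩|` with `k < s`, then
`P = ∑ₖ xₖ ⟨Ax, Ae_k⟩ ≤ ‖x‖₁ |b| ≤ √s ‖x‖₂ |b|`, so `P² ≤ s r b²`. Eliminating `b` leaves
`P² + s (P - r)² ≤ s δ² r²`; the left side is at least `s r² / (s + 1)`, forcing `δ² ≥ 1/(s + 1)`.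
-/

open Matrix Function Finset

section

variable {m n : Type*} [Fintype m] [Fintype n]

def IsRestrictedIsometryOn (A : Matrix m n ℝ) (δ : ℝ) (S : Set (n → ℝ)) : Prop :=
  ∀ y ∈ S, (1 - δ) * (y ⬝ᵥ y) ≤ (A *ᵥ y) ⬝ᵥ (A *ᵥ y) ∧
    (A *ᵥ y) ⬝ᵥ (A *ᵥ y) ≤ (1 + δ) * (y ⬝ᵥ y)

theorem dotProduct_self_nonneg (v : n → ℝ) : 0 ≤ v ⬝ᵥ v :=
  sum_nonneg fun i _ => mul_self_nonneg (v i)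

theorem dotProduct_self_pos {v : n → ℝ} (hv : v ≠ 0) : 0 < v ⬝ᵥ v :=
  (dotProduct_self_nonneg v).lt_of_ne (Ne.symm (dotProduct_self_eq_zero.not.mpr hv))

theorem IsRestrictedIsometryOn.nonneg {A : Matrix m n ℝ} {δ : ℝ} {S : Set (n → ℝ)}
    {y : n → ℝ} (hA : IsRestrictedIsometryOn A δ S) (hy : y ∈ S) (hy0 : y ≠ 0) : 0 ≤ δ := by
  have hpos := dotProduct_self_pos hy0
  obtain ⟨hlow, hup⟩ := hA y hy
  nlinarith

theorem mul_sq_le_mul_mul_of_sq_le_mul {a a' b c c' ε r w : ℝ} (ha : 0 ≤ a) (ha' : 0 ≤ a')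
    (hr : 0 ≤ r) (hb : b ^ 2 ≤ a * c) (hb' : b ^ 2 ≤ a' * c')
    (hsum : a + a' = ε * r) (hsum' : c + c' = ε * w) :
    r * b ^ 2 ≤ w * (a * a') := by
  rcases (add_nonneg ha ha').eq_or_lt with h0 | hpos
  · have ha0 : a = 0 := by linarith
    have ha'0 : a' = 0 := by linarith
    have hb0 : b = 0 :=
      pow_eq_zero_iff two_ne_zero |>.mp (le_antisymm (by simpa [ha0] using hb) (sq_nonneg b))
    simp [ha0, ha'0, hb0]
  · have hε : 0 < ε := pos_of_mul_pos_left (hsum ▸ hpos) hr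
    refine le_of_mul_le_mul_left ?_ hε
    calc ε * (r * b ^ 2) = a' * b ^ 2 + a * b ^ 2 := by linear_combination (-b ^ 2) * hsum
      _ ≤ a' * (a * c) + a * (a' * c') := by gcongr
      _ = ε * (w * (a * a')) := by linear_combination (a * a') * hsum'

theorem IsRestrictedIsometryOn.mul_sq_dotProduct_mulVec_le {A : Matrix m n ℝ} {δ : ℝ}
    {u v : n → ℝ} (hA : IsRestrictedIsometryOn A δ (Submodule.span ℝ {u, v}))
    (huv : u ⬝ᵥ v = 0) :
    (u ⬝ᵥ u) * ((A *ᵥ u) ⬝ᵥ (A *ᵥ v)) ^ 2 ≤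
      (v ⬝ᵥ v) * (((A *ᵥ u) ⬝ᵥ (A *ᵥ u) - (1 - δ) * (u ⬝ᵥ u)) *
        ((1 + δ) * (u ⬝ᵥ u) - (A *ᵥ u) ⬝ᵥ (A *ᵥ u))) := by
  have hnorm : ∀ t : ℝ, (t • u + v) ⬝ᵥ (t • u + v) = (u ⬝ᵥ u) * (t * t) + v ⬝ᵥ v := by
    intro t
    simp only [add_dotProduct, dotProduct_add, smul_dotProduct, dotProduct_smul, smul_eq_mul,
      huv, dotProduct_comm v u]
    ring
  have himage : ∀ t : ℝ, (A *ᵥ (t • u + v)) ⬝ᵥ (A *ᵥ (t • u + v)) =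
      (A *ᵥ u) ⬝ᵥ (A *ᵥ u) * (t * t) + 2 * ((A *ᵥ u) ⬝ᵥ (A *ᵥ v)) * t +
        (A *ᵥ v) ⬝ᵥ (A *ᵥ v) := by
    intro t
    simp only [mulVec_add, mulVec_smul, add_dotProduct, dotProduct_add, smul_dotProduct,
      dotProduct_smul, smul_eq_mul, dotProduct_comm (A *ᵥ v) (A *ᵥ u)]
    ring
  have hline : ∀ t : ℝ, t • u + v ∈ Submodule.span ℝ {u, v} :=
    fun t => Submodule.mem_span_pair.mpr ⟨t, 1, by rw [one_smul]⟩
  set r := u ⬝ᵥ u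
  set P := (A *ᵥ u) ⬝ᵥ (A *ᵥ u)
  set b := (A *ᵥ u) ⬝ᵥ (A *ᵥ v)
  set Q := (A *ᵥ v) ⬝ᵥ (A *ᵥ v)
  have hlow := discrim_le_zero (a := P - (1 - δ) * r) (b := 2 * b)
    (c := Q - (1 - δ) * (v ⬝ᵥ v)) fun t => by
      have h := (hA _ (hline t)).1
      rw [hnorm, himage] at h
      linarith
  have hup := discrim_le_zero (a := (1 + δ) * r - P) (b := -(2 * b))
    (c := (1 + δ) * (v ⬝ᵥ v) - Q) fun t => by
      have h := (hA _ (hline t)).2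
      rw [hnorm, himage] at h
      linarith
  obtain ⟨hu_low, hu_up⟩ := hA u (Submodule.subset_span (by simp))
  refine mul_sq_le_mul_mul_of_sq_le_mul (c := Q - (1 - δ) * (v ⬝ᵥ v))
    (c' := (1 + δ) * (v ⬝ᵥ v) - Q) (ε := 2 * δ) (sub_nonneg.mpr hu_low)
    (sub_nonneg.mpr hu_up) (dotProduct_self_nonneg u) ?_ ?_ (by ring) (by ring)
  · rw [discrim] at hlow
    linarith
  · rw [discrim] at hup
    linarith

theorem sq_dotProduct_le_card_mul_dotProduct_self_mul_sq {w x : n → ℝ} {T : Finset n} {M : ℝ}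
    (hx : support x ⊆ T) (hw : ∀ k ∈ T, |w k| ≤ M) :
    (w ⬝ᵥ x) ^ 2 ≤ #T * (x ⬝ᵥ x) * M ^ 2 := by
  have hsum : w ⬝ᵥ x = ∑ k ∈ T, w k * x k :=
    (sum_subset (subset_univ T) fun k _ hk => by
      rw [notMem_support.mp fun h => hk (hx h), mul_zero]).symm
  have hl1 : |w ⬝ᵥ x| ≤ M * ∑ k ∈ T, |x k| := by
    rw [hsum, mul_sum]
    refine (abs_sum_le_sum_abs _ _).trans (sum_le_sum fun k hk => ?_)
    rw [abs_mul]
    exact mul_le_mul_of_nonneg_right (hw k hk) (abs_nonneg _)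
  have hl2 : ∑ k ∈ T, |x k| ^ 2 ≤ x ⬝ᵥ x := by
    simp_rw [sq_abs, sq]
    exact sum_le_univ_sum_of_nonneg fun k => mul_self_nonneg (x k)
  calc (w ⬝ᵥ x) ^ 2 = |w ⬝ᵥ x| ^ 2 := (sq_abs _).symm
    _ ≤ M ^ 2 * (∑ k ∈ T, |x k|) ^ 2 := by
      rw [← mul_pow]; exact pow_le_pow_left₀ (abs_nonneg _) hl1 2
    _ ≤ M ^ 2 * (#T * ∑ k ∈ T, |x k| ^ 2) := by
      gcongr; exact sq_sum_le_card_mul_sum_sq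
    _ ≤ #T * (x ⬝ᵥ x) * M ^ 2 := by
      rw [mul_comm]; gcongr

end

theorem support_subset_union_of_mem_span_pair {ι R : Type*} [Semiring R] {u v y : ι → R}
    (hy : y ∈ Submodule.span R {u, v}) : support y ⊆ support u ∪ support v := by
  obtain ⟨a, b, rfl⟩ := Submodule.mem_span_pair.mp hy
  exact (support_add _ _).trans
    (Set.union_subset_union (support_const_smul_subset a u) (support_const_smul_subset b v))

theorem ncard_support_le_of_mem_span_pair_single {ι R : Type*} [Semiring R] [DecidableEq ι]
    {u y : ι → R} {T : Finset ι} {j : ι} (hu : support u ⊆ T)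
    (hy : y ∈ Submodule.span R {u, Pi.single j 1}) : (support y).ncard ≤ #T + 1 :=
  calc (support y).ncard ≤ #(insert j T) := by
        rw [← Set.ncard_coe_finset, coe_insert, Set.insert_eq, Set.union_comm]
        exact Set.ncard_le_ncard ((support_subset_union_of_mem_span_pair hy).trans
          (Set.union_subset_union hu Pi.support_single_subset)) (Set.toFinite _)
    _ ≤ #T + 1 := card_insert_le _ _

theorem one_le_mul_sq_of_sq_le {s r P b δ : ℝ} (hs : 0 < s) (hr : 0 < r)
    (hP : P ^ 2 ≤ s * r * b ^ 2) (hb : r * b ^ 2 ≤ (P - (1 - δ) * r) * ((1 + δ) * r - P)) :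
    1 ≤ (s + 1) * δ ^ 2 := by
  have hPb : P ^ 2 ≤ s * ((P - (1 - δ) * r) * ((1 + δ) * r - P)) :=
    hP.trans (by rw [mul_assoc]; exact mul_le_mul_of_nonneg_left hb hs.le)
  have key : s * r ^ 2 ≤ s * r ^ 2 * ((s + 1) * δ ^ 2) := by
    nlinarith [sq_nonneg ((s + 1) * P - s * r),
      mul_le_mul_of_nonneg_left hPb (by linarith : 0 ≤ s + 1)]
  exact le_of_mul_le_mul_left (by simpa using key) (mul_pos hs (pow_pos hr 2))

theorem mul_sq_lt_one_of_lt_one_div_sqrt {c δ : ℝ} (hc : 0 < c) (hδ0 : 0 ≤ δ)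
    (hδ : δ < 1 / √c) : c * δ ^ 2 < 1 := by
  have h := pow_lt_pow_left₀ hδ hδ0 two_ne_zero
  rw [div_pow, one_pow, Real.sq_sqrt hc.le, lt_div_iff₀ hc] at h
  linarith

/-- If `A` satisfies the RIP of order `s+1` with constant `δ < 1/√(s+1)` and
`x` has support a nonempty subset of the first `s` indices, then
`max_{k < s} |⟨Ax, A e_k⟩| > |⟨Ax, A e_j⟩|` for every index `j` with `j ≥ s`. -/
theorem omp_lemma2 (s m N : ℕ) (hs : 0 < s)
    (A : Matrix (Fin m) (Fin N) ℝ) (δ : ℝ) (hδ : δ < 1 / Real.sqrt ((s : ℝ) + 1))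
    (hRIP : ∀ y : Fin N → ℝ, (Function.support y).ncard ≤ s + 1 →
      (1 - δ) * (y ⬝ᵥ y) ≤ (A *ᵥ y) ⬝ᵥ (A *ᵥ y) ∧
        (A *ᵥ y) ⬝ᵥ (A *ᵥ y) ≤ (1 + δ) * (y ⬝ᵥ y))
    (x : Fin N → ℝ)
    (hsupp : Function.support x ⊆ {i : Fin N | (i : ℕ) < s})
    (hne : (Function.support x).Nonempty) :
    ∀ j : Fin N, s ≤ (j : ℕ) →
      |(A *ᵥ x) ⬝ᵥ (A *ᵥ (Pi.single j 1 : Fin N → ℝ))| <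
        ⨆ k : {i : Fin N // (i : ℕ) < s},
          |(A *ᵥ x) ⬝ᵥ (A *ᵥ (Pi.single (k : Fin N) 1 : Fin N → ℝ))| := by
  intro j hj
  by_contra! hle
  set w := (A *ᵥ x) ᵥ* A
  have hcorr (k : Fin N) : (A *ᵥ x) ⬝ᵥ (A *ᵥ (Pi.single k 1 : Fin N → ℝ)) = w k := by
    rw [dotProduct_mulVec, dotProduct_single, mul_one]
  simp only [hcorr] at hle
  set T : Finset (Fin N) := {i | (i : ℕ) < s}
  have hT : #T ≤ s := Fin.card_filter_val_lt.trans_le (min_le_right _ _)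
  have hxT : support x ⊆ T := fun i hi => by simpa [T] using hsupp hi
  have hxj : x j = 0 := notMem_support.mp fun h => (hsupp h).not_ge hj
  have hA : IsRestrictedIsometryOn A δ (Submodule.span ℝ {x, Pi.single j 1}) := fun y hy =>
    hRIP y ((ncard_support_le_of_mem_span_pair_single hxT hy).trans (by omega))
  have hx0 : x ≠ 0 := support_nonempty_iff.mp hne
  have hδ0 : 0 ≤ δ := hA.nonneg (Submodule.subset_span (by simp)) hx0
  have hb := hA.mul_sq_dotProduct_mulVec_le (by rw [dotProduct_single, hxj, zero_mul])
  rw [hcorr, dotProduct_single, Pi.single_eq_same, one_mul, one_mul, dotProduct_mulVec] at hb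
  have hl1 := sq_dotProduct_le_card_mul_dotProduct_self_mul_sq hxT (M := |w j|) fun k hk =>
    (le_ciSup (Set.finite_range _).bddAbove
      (⟨k, by simpa [T] using hk⟩ : {i : Fin N // (i : ℕ) < s})).trans hle
  have hsq : 1 ≤ ((s : ℝ) + 1) * δ ^ 2 := by
    refine one_le_mul_sq_of_sq_le (by exact_mod_cast hs) (dotProduct_self_pos hx0)
      (hl1.trans ?_) hb
    rw [sq_abs]
    gcongr
    exact dotProduct_self_nonneg x
  exact (mul_sq_lt_one_of_lt_one_div_sqrt (by positivity) hδ0 hδ).not_ge hsq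
end

section
/- Let s be a positive integer and suppose A ∈ ℝ^{m×N} satisfies the restricted isometry property of order s+1 with some constant δ < 1/√(s+1). If x ∈ ℝ^N is a nonzero vector with at most s nonzero entries, then for every index j ∉ supp(x), max_{k ∈ supp(x)} |⟨Ax, A e_k⟩| > |⟨Ax, A e_j⟩|; in particular, every index maximizing |⟨Ax, A e_k⟩| over all k ∈ {1,…,N} belongs to supp(x). -/
/-!
Suppose some `j ∉ supp x` has `|⟨Ax, Aeₖ⟩| ≤ |⟨Ax, Aeⱼ⟩| =: a` for every `k ∈ supp x`. Then
`‖Ax‖² = ∑ₖ xₖ ⟨Ax, Aeₖ⟩ ≤ ‖x‖₁ a ≤ √s ‖x‖₂ a`. Moving `x` by `c eⱼ`, with `|c| = √s ‖x‖₂` and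
the sign of `c` opposite to that of `⟨Ax, Aeⱼ⟩`, gives an `(s+1)`-sparse `w` with `⟨Ax, Aw⟩ ≤ 0`,
`⟨x, w⟩ = ‖x‖²` and `‖w‖ = √(s+1) ‖x‖`. By polarization the RIP yields
`⟨Ax, Aw⟩ ≥ ⟨x, w⟩ - δ ‖x‖ ‖w‖ = (1 - δ √(s+1)) ‖x‖² > 0`, a contradiction.
-/

open Matrix Function

namespace Matrix

variable {ι κ : Type*} [Fintype ι] [Fintype κ]

def IsRestrictedIsometry (A : Matrix ι κ ℝ) (s : ℕ) (δ : ℝ) : Prop :=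
  ∀ y : κ → ℝ, (support y).ncard ≤ s →
    (1 - δ) * (y ⬝ᵥ y) ≤ (A *ᵥ y) ⬝ᵥ (A *ᵥ y) ∧ (A *ᵥ y) ⬝ᵥ (A *ᵥ y) ≤ (1 + δ) * (y ⬝ᵥ y)

theorem dotProduct_self_pos_of_ne_zero {x : κ → ℝ} (hx : x ≠ 0) : 0 < x ⬝ᵥ x := by
  simpa using dotProduct_star_self_pos_iff.2 hx

theorem sq_sum_abs_le_ncard_support_mul_dotProduct_self (x : κ → ℝ) :
    (∑ k, |x k|) ^ 2 ≤ (support x).ncard * (x ⬝ᵥ x) := by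
  classical
  set S := (support x).toFinset
  have hS : ∑ k, |x k| = ∑ k ∈ S, |x k| :=
    (Finset.sum_subset S.subset_univ fun k _ hk => by simpa [S] using hk).symm
  calc (∑ k, |x k|) ^ 2 = (∑ k ∈ S, |x k|) ^ 2 := by rw [hS]
    _ ≤ S.card * ∑ k ∈ S, |x k| ^ 2 := sq_sum_le_card_mul_sum_sq
    _ ≤ (S.card : ℝ) * ∑ k, |x k| ^ 2 := by gcongr; exact S.subset_univ
    _ = (support x).ncard * (x ⬝ᵥ x) := by
      simp [S, Set.ncard_eq_toFinset_card', dotProduct, sq]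

theorem dotProduct_mulVec_self_le_sum_abs_mul [DecidableEq κ] (A : Matrix ι κ ℝ) (x : κ → ℝ)
    {a : ℝ} (ha : ∀ k ∈ support x, |(A *ᵥ x) ⬝ᵥ (A *ᵥ Pi.single k 1)| ≤ a) :
    (A *ᵥ x) ⬝ᵥ (A *ᵥ x) ≤ (∑ k, |x k|) * a := by
  have hexpand : (A *ᵥ x) ⬝ᵥ (A *ᵥ x) = ∑ k, x k * (A *ᵥ x) ⬝ᵥ (A *ᵥ Pi.single k 1) := by
    simp only [dotProduct_mulVec _ A, dotProduct_single_one]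
    exact dotProduct_comm _ _
  rw [hexpand, Finset.sum_mul]
  refine Finset.sum_le_sum fun k _ => ?_
  by_cases hk : x k = 0
  · simp [hk]
  calc x k * (A *ᵥ x) ⬝ᵥ (A *ᵥ Pi.single k 1)
      ≤ |x k| * |(A *ᵥ x) ⬝ᵥ (A *ᵥ Pi.single k 1)| := by rw [← abs_mul]; exact le_abs_self _
    _ ≤ |x k| * a := mul_le_mul_of_nonneg_left (ha k hk) (abs_nonneg _)

namespace IsRestrictedIsometry

variable {A : Matrix ι κ ℝ} {s : ℕ} {δ : ℝ}

theorem dotProduct_sub_mul_le_dotProduct_mulVec_of_dotProduct_self_eq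
    (hA : A.IsRestrictedIsometry s δ) {u v : κ → ℝ} (huv : (support u ∪ support v).ncard ≤ s)
    (hnorm : u ⬝ᵥ u = v ⬝ᵥ v) :
    u ⬝ᵥ v - δ * (u ⬝ᵥ u) ≤ (A *ᵥ u) ⬝ᵥ (A *ᵥ v) := by
  have hcard {w : κ → ℝ} (hw : support w ⊆ support u ∪ support v) : (support w).ncard ≤ s :=
    (Set.ncard_le_ncard hw).trans huv
  have hadd := (hA (u + v) (hcard (support_add u v))).1
  have hsub := (hA (u - v) (hcard (support_sub u v))).2
  simp only [mulVec_add, mulVec_sub, add_dotProduct, dotProduct_add, sub_dotProduct,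
    dotProduct_sub, dotProduct_comm v u, dotProduct_comm (A *ᵥ v) (A *ᵥ u), ← hnorm] at hadd hsub
  linarith

theorem dotProduct_sub_le_dotProduct_mulVec (hA : A.IsRestrictedIsometry s δ) {u v : κ → ℝ}
    (huv : (support u ∪ support v).ncard ≤ s) :
    u ⬝ᵥ v - δ * √(u ⬝ᵥ u) * √(v ⬝ᵥ v) ≤ (A *ᵥ u) ⬝ᵥ (A *ᵥ v) := by
  rcases eq_or_ne u 0 with rfl | hu
  · simp
  rcases eq_or_ne v 0 with rfl | hv
  · simp
  set a := √(u ⬝ᵥ u)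
  set b := √(v ⬝ᵥ v)
  have ha : 0 < a := Real.sqrt_pos.2 (dotProduct_self_pos_of_ne_zero hu)
  have hb : 0 < b := Real.sqrt_pos.2 (dotProduct_self_pos_of_ne_zero hv)
  have hua : u ⬝ᵥ u = a * a := (Real.mul_self_sqrt (dotProduct_self_pos_of_ne_zero hu).le).symm
  have hvb : v ⬝ᵥ v = b * b := (Real.mul_self_sqrt (dotProduct_self_pos_of_ne_zero hv).le).symm
  -- rescale to `b • u` and `a • v`, which have the same norm `a * b`
  have hscaled := hA.dotProduct_sub_mul_le_dotProduct_mulVec_of_dotProduct_self_eq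
    (u := b • u) (v := a • v)
    (le_trans (Set.ncard_le_ncard (Set.union_subset_union (support_const_smul_subset b u)
      (support_const_smul_subset a v))) huv)
    (by simp only [smul_dotProduct, dotProduct_smul, smul_eq_mul, hua, hvb]; ring)
  simp only [mulVec_smul, smul_dotProduct, dotProduct_smul, smul_eq_mul, hua] at hscaled
  refine le_of_mul_le_mul_left ?_ (mul_pos ha hb)
  linear_combination hscaled

theorem dotProduct_mulVec_add_single_pos [DecidableEq κ]
    (hA : A.IsRestrictedIsometry (s + 1) δ) (hδ : δ < 1 / √((s : ℝ) + 1)) {x : κ → ℝ}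
    (hx : x ≠ 0) (hsupp : (support x).ncard ≤ s) {j : κ} (hj : x j = 0) {c : ℝ}
    (hc : c ^ 2 = s * (x ⬝ᵥ x)) :
    0 < (A *ᵥ x) ⬝ᵥ (A *ᵥ (x + Pi.single j c)) := by
  have hn : 0 < x ⬝ᵥ x := dotProduct_self_pos_of_ne_zero hx
  have hδ' : δ * √((s : ℝ) + 1) < 1 := (lt_div_iff₀ (by positivity)).1 hδ
  have hcross : x ⬝ᵥ (x + Pi.single j c) = x ⬝ᵥ x := by
    rw [dotProduct_add, dotProduct_single, hj, zero_mul, add_zero]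
  have hnorm : (x + Pi.single j c) ⬝ᵥ (x + Pi.single j c) = (s + 1) * (x ⬝ᵥ x) := by
    simp only [add_dotProduct, dotProduct_add, dotProduct_single, single_dotProduct, hj,
      Pi.add_apply, Pi.single_eq_same]
    linear_combination hc
  have hsupport : (support x ∪ support (x + Pi.single j c)).ncard ≤ s + 1 := by
    have hsub : support x ∪ support (x + Pi.single j c) ⊆ support x ∪ {j} :=
      Set.union_subset Set.subset_union_left
        ((support_add _ _).trans (Set.union_subset_union_right _ Pi.support_single_subset))
    calc _ ≤ (support x ∪ {j}).ncard := Set.ncard_le_ncard hsub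
      _ ≤ (support x).ncard + 1 := by simpa using Set.ncard_union_le (support x) {j}
      _ ≤ s + 1 := by omega
  have hlower := hA.dotProduct_sub_le_dotProduct_mulVec hsupport
  rw [hcross, hnorm, Real.sqrt_mul (by positivity)] at hlower
  have hsqrt : δ * √(x ⬝ᵥ x) * (√((s : ℝ) + 1) * √(x ⬝ᵥ x)) =
      δ * √((s : ℝ) + 1) * (x ⬝ᵥ x) := by
    linear_combination δ * √((s : ℝ) + 1) * Real.mul_self_sqrt hn.le
  linarith [mul_pos hn (sub_pos.2 hδ')]

theorem exists_abs_dotProduct_mulVec_single_lt [DecidableEq κ]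
    (hA : A.IsRestrictedIsometry (s + 1) δ) (hδ : δ < 1 / √((s : ℝ) + 1)) {x : κ → ℝ}
    (hx : x ≠ 0) (hsupp : (support x).ncard ≤ s) {j : κ} (hj : j ∉ support x) :
    ∃ k ∈ support x,
      |(A *ᵥ x) ⬝ᵥ (A *ᵥ Pi.single j 1)| < |(A *ᵥ x) ⬝ᵥ (A *ᵥ Pi.single k 1)| := by
  by_contra! hmax
  have hn : 0 ≤ x ⬝ᵥ x := (dotProduct_self_pos_of_ne_zero hx).le
  set t := √(s * (x ⬝ᵥ x))
  have ht : t ^ 2 = s * (x ⬝ᵥ x) := Real.sq_sqrt (by positivity)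
  have hℓ1 : ∑ k, |x k| ≤ t := Real.le_sqrt_of_sq_le <|
    (sq_sum_abs_le_ncard_support_mul_dotProduct_self x).trans
      (mul_le_mul_of_nonneg_right (by exact_mod_cast hsupp) hn)
  have hAx := dotProduct_mulVec_self_le_sum_abs_mul A x hmax
  obtain ⟨c, hc, hcg⟩ : ∃ c : ℝ, c ^ 2 = s * (x ⬝ᵥ x) ∧
      ((A *ᵥ x) ᵥ* A) j * c = -(t * |((A *ᵥ x) ᵥ* A) j|) := by
    rcases abs_cases (((A *ᵥ x) ᵥ* A) j) with ⟨h, -⟩ | ⟨h, -⟩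
    exacts [⟨-t, by rw [neg_sq, ht], by rw [h]; ring⟩, ⟨t, ht, by rw [h]; ring⟩]
  have hpos := hA.dotProduct_mulVec_add_single_pos hδ hx hsupp (notMem_support.1 hj) hc
  simp only [dotProduct_mulVec _ A, dotProduct_add, dotProduct_single, mul_one, hcg] at hpos hAx
  linarith [mul_le_mul_of_nonneg_right hℓ1 (abs_nonneg (((A *ᵥ x) ᵥ* A) j))]

end IsRestrictedIsometry

end Matrix

theorem omp_first_iteration_general (s m N : ℕ)
    (A : Matrix (Fin m) (Fin N) ℝ) (δ : ℝ) (hδ : δ < 1 / Real.sqrt ((s : ℝ) + 1))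
    (hRIP : ∀ y : Fin N → ℝ, (Function.support y).ncard ≤ s + 1 →
      (1 - δ) * (y ⬝ᵥ y) ≤ (A *ᵥ y) ⬝ᵥ (A *ᵥ y) ∧
        (A *ᵥ y) ⬝ᵥ (A *ᵥ y) ≤ (1 + δ) * (y ⬝ᵥ y))
    (x : Fin N → ℝ) (hx : x ≠ 0)
    (hsupp : (Function.support x).ncard ≤ s) :
    (∀ j : Fin N, j ∉ Function.support x →
      |(A *ᵥ x) ⬝ᵥ (A *ᵥ (Pi.single j 1 : Fin N → ℝ))| <
        ⨆ k : Function.support x,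
          |(A *ᵥ x) ⬝ᵥ (A *ᵥ (Pi.single (k : Fin N) 1 : Fin N → ℝ))|) ∧
    ∀ j : Fin N,
      (∀ k : Fin N, |(A *ᵥ x) ⬝ᵥ (A *ᵥ (Pi.single k 1 : Fin N → ℝ))| ≤
          |(A *ᵥ x) ⬝ᵥ (A *ᵥ (Pi.single j 1 : Fin N → ℝ))|) →
      j ∈ Function.support x := by
  have hA : A.IsRestrictedIsometry (s + 1) δ := hRIP
  refine ⟨fun j hj => ?_, fun j hj => ?_⟩
  · obtain ⟨k, hk, hlt⟩ := hA.exists_abs_dotProduct_mulVec_single_lt hδ hx hsupp hj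
    have : Nonempty (Function.support x) := ⟨⟨k, hk⟩⟩
    exact (lt_ciSup_iff (Set.finite_range _).bddAbove).2 ⟨⟨k, hk⟩, hlt⟩
  · by_contra hj'
    obtain ⟨k, -, hlt⟩ := hA.exists_abs_dotProduct_mulVec_single_lt hδ hx hsupp hj'
    exact (hlt.trans_le (hj k)).false

/-- If `A` satisfies the RIP of order `s+1` with constant `δ < 1/√(s+1)` and
`x ≠ 0` has at most `s` nonzero entries, then for every `j ∉ supp(x)`,
`max_{k ∈ supp(x)} |⟨Ax, A e_k⟩| > |⟨Ax, A e_j⟩|`; in particular every index maximizing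
`|⟨Ax, A e_k⟩|` over all `k` belongs to `supp(x)`. -/
theorem omp_first_iteration (s m N : ℕ) (hs : 0 < s)
    (A : Matrix (Fin m) (Fin N) ℝ) (δ : ℝ) (hδ : δ < 1 / Real.sqrt ((s : ℝ) + 1))
    (hRIP : ∀ y : Fin N → ℝ, (Function.support y).ncard ≤ s + 1 →
      (1 - δ) * (y ⬝ᵥ y) ≤ (A *ᵥ y) ⬝ᵥ (A *ᵥ y) ∧
        (A *ᵥ y) ⬝ᵥ (A *ᵥ y) ≤ (1 + δ) * (y ⬝ᵥ y))
    (x : Fin N → ℝ) (hx : x ≠ 0)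
    (hsupp : (Function.support x).ncard ≤ s) :
    (∀ j : Fin N, j ∉ Function.support x →
      |(A *ᵥ x) ⬝ᵥ (A *ᵥ (Pi.single j 1 : Fin N → ℝ))| <
        ⨆ k : Function.support x,
          |(A *ᵥ x) ⬝ᵥ (A *ᵥ (Pi.single (k : Fin N) 1 : Fin N → ℝ))|) ∧
    ∀ j : Fin N,
      (∀ k : Fin N, |(A *ᵥ x) ⬝ᵥ (A *ᵥ (Pi.single k 1 : Fin N → ℝ))| ≤
          |(A *ᵥ x) ⬝ᵥ (A *ᵥ (Pi.single j 1 : Fin N → ℝ))|) →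
      j ∈ Function.support x :=
  omp_first_iteration_general s m N A δ hδ hRIP x hx hsupp
end

section
/- Let s be a positive integer and suppose A ∈ ℝ^{m×N} satisfies the restricted isometry property of order s+1 with some constant δ < 1/√(s+1). Let x ∈ ℝ^N have at most s nonzero entries, let Ω be a proper subset of supp(x), and let r = Ax − P(Ax), where P is the orthogonal projection of ℝ^m onto the linear span of the columns {A e_i : i ∈ Ω}. Then r ≠ 0, ⟨r, A e_i⟩ = 0 for every i ∈ Ω, and for every index j ∉ supp(x), max_{k ∈ supp(x)} |⟨r, A e_k⟩| > |⟨r, A e_j⟩|; consequently every index maximizing |⟨r, A e_k⟩| over k ∈ {1,…,N} belongs to supp(x) \ Ω. -/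
/-!
Write the residual as `r = A u` with `u = x - z`, where `A z = P(Ax)` and `z` is supported
on `Ω`; then `u ≠ 0` is `s`-sparse with `supp u ⊆ supp x`, and the correlations `⟨r, A e_k⟩`
form the vector `g = Aᵀ A u`. From above, `‖A u‖² = ⟨g, u⟩ ≤ ‖u‖₁ · max_{supp x} |g|`.
From below, for `j ∉ supp x` the polarized RIP bound `⟨Au, Av⟩ ≥ ⟨u, v⟩ - δ ‖u‖ ‖v‖`,
applied to `v = u ∓ ‖u‖₁ e_j` and combined with `‖u‖₁² ≤ s ‖u‖²`, gives
`‖A u‖² - ‖u‖₁ |g_j| ≥ (1 - δ √(s+1)) ‖u‖² > 0`. Hence `|g_j| < max_{supp x} |g|`.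
-/

open Matrix Function

variable {ι κ : Type*} [Fintype κ]

theorem exists_mulVec_eq_of_mem_span [DecidableEq κ] {A : Matrix ι κ ℝ} {Ω : Set κ} {p : ι → ℝ}
    (hp : p ∈ Submodule.span ℝ ((fun i => A *ᵥ Pi.single i 1) '' Ω)) :
    ∃ z : κ → ℝ, support z ⊆ Ω ∧ A *ᵥ z = p := by
  obtain ⟨z, hz, rfl⟩ : p ∈ (Submodule.pi Ωᶜ fun _ => ⊥).map A.mulVecLin := by
    refine Submodule.span_le.mpr ?_ hp
    rintro _ ⟨i, hi, rfl⟩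
    exact ⟨Pi.single i 1, fun k hk => Pi.single_eq_of_ne (by rintro rfl; exact hk hi) 1, rfl⟩
  exact ⟨z, fun k hk => by_contra fun hkΩ => hk (hz k hkΩ), rfl⟩

theorem exists_sub_eq_mulVec_of_mem_span [DecidableEq κ] {A : Matrix ι κ ℝ} {x : κ → ℝ}
    {Ω : Set κ} (hΩ : Ω ⊂ support x) {p : ι → ℝ}
    (hp : p ∈ Submodule.span ℝ ((fun i => A *ᵥ Pi.single i 1) '' Ω)) :
    ∃ u : κ → ℝ, A *ᵥ x - p = A *ᵥ u ∧ support u ⊆ support x ∧ u ≠ 0 := by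
  obtain ⟨z, hzΩ, rfl⟩ := exists_mulVec_eq_of_mem_span hp
  obtain ⟨k, hkx, hkΩ⟩ := Set.exists_of_ssubset hΩ
  refine ⟨x - z, (mulVec_sub A x z).symm,
    (support_sub _ _).trans (Set.union_subset le_rfl (hzΩ.trans hΩ.subset)), ?_⟩
  exact ne_iff.mpr ⟨k, by simpa [notMem_support.mp fun h => hkΩ (hzΩ h)] using hkx⟩

variable [Fintype ι]

def HasRIP (A : Matrix ι κ ℝ) (c : ℕ) (δ : ℝ) : Prop :=
  ∀ y : κ → ℝ, (support y).ncard ≤ c →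
    (1 - δ) * (y ⬝ᵥ y) ≤ (A *ᵥ y) ⬝ᵥ (A *ᵥ y) ∧ (A *ᵥ y) ⬝ᵥ (A *ᵥ y) ≤ (1 + δ) * (y ⬝ᵥ y)

theorem dotProduct_self_pos_s6 {u : κ → ℝ} (hu : u ≠ 0) : 0 < u ⬝ᵥ u := by
  simpa using dotProduct_self_star_pos_iff.mpr hu

theorem dotProduct_self_nonneg_s6 (u : κ → ℝ) : 0 ≤ u ⬝ᵥ u := by
  simpa using dotProduct_self_star_nonneg u

theorem dotProduct_mulVec_single_one [DecidableEq κ] (A : Matrix ι κ ℝ) (r : ι → ℝ) (k : κ) :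
    r ⬝ᵥ (A *ᵥ Pi.single k 1) = (r ᵥ* A) k := by
  rw [dotProduct_mulVec, dotProduct_single, mul_one]

theorem sq_sum_abs_le_ncard_support_mul (u : κ → ℝ) :
    (∑ k, |u k|) ^ 2 ≤ (support u).ncard * (u ⬝ᵥ u) := by
  classical
  set S := Finset.univ.filter (u · ≠ 0)
  have hS : (support u).ncard = S.card := by
    rw [← Set.ncard_coe_finset]; congr 1; ext; simp [S]
  have hsum : ∀ f : ℝ → ℝ, f 0 = 0 → ∑ k ∈ S, f (u k) = ∑ k, f (u k) := fun f hf =>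
    Finset.sum_filter_of_ne fun k _ h hk => h (by rw [hk, hf])
  calc (∑ k, |u k|) ^ 2 = (∑ k ∈ S, |u k|) ^ 2 := by rw [hsum _ abs_zero]
    _ ≤ S.card * ∑ k ∈ S, |u k| ^ 2 := sq_sum_le_card_mul_sum_sq
    _ = (support u).ncard * (u ⬝ᵥ u) := by
      rw [hS, hsum (fun t => |t| ^ 2) (by simp), dotProduct]
      simp_rw [sq_abs, sq]

theorem dotProduct_le_sum_abs_mul {g u : κ → ℝ} {α : ℝ}
    (hα : ∀ k ∈ support u, |g k| ≤ α) : g ⬝ᵥ u ≤ (∑ k, |u k|) * α := by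
  rw [dotProduct, Finset.sum_mul]
  refine Finset.sum_le_sum fun k _ => ?_
  by_cases hk : u k = 0
  · simp [hk]
  calc g k * u k ≤ |g k| * |u k| := by rw [← abs_mul]; exact le_abs_self _
    _ ≤ α * |u k| := by gcongr; exact hα k hk
    _ = |u k| * α := mul_comm _ _

namespace HasRIP

variable {A : Matrix ι κ ℝ} {c : ℕ} {δ : ℝ}

theorem mono (hA : HasRIP A c δ) {δ' : ℝ} (hδ : δ ≤ δ') : HasRIP A c δ' := fun y hy => by
  have := dotProduct_self_nonneg_s6 y
  obtain ⟨hlo, hhi⟩ := hA y hy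
  constructor <;> nlinarith

theorem dotProduct_mulVec_self_pos (hA : HasRIP A c δ) (hδ : δ < 1) {u : κ → ℝ}
    (hu : (support u).ncard ≤ c) (hu0 : u ≠ 0) : 0 < (A *ᵥ u) ⬝ᵥ (A *ᵥ u) :=
  (mul_pos (sub_pos.mpr hδ) (dotProduct_self_pos_s6 hu0)).trans_le (hA u hu).1

theorem sub_mul_sqrt_le_dotProduct (hA : HasRIP A c δ) {u v : κ → ℝ}
    (huv : (support u ∪ support v).ncard ≤ c) :
    u ⬝ᵥ v - δ * √(u ⬝ᵥ u) * √(v ⬝ᵥ v) ≤ (A *ᵥ u) ⬝ᵥ (A *ᵥ v) := by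
  rcases eq_or_ne u 0 with rfl | hu
  · simp
  rcases eq_or_ne v 0 with rfl | hv
  · simp
  have hcomb : ∀ a b : ℝ, (support (a • u + b • v)).ncard ≤ c := fun a b =>
    (Set.ncard_le_ncard ((support_add _ _).trans (Set.union_subset_union
      (support_smul_subset_right _ _) (support_smul_subset_right _ _))) (Set.toFinite _)).trans huv
  set a := √(v ⬝ᵥ v)
  set b := √(u ⬝ᵥ u)
  have ha : 0 < a := Real.sqrt_pos.mpr (dotProduct_self_pos_s6 hv)
  have hb : 0 < b := Real.sqrt_pos.mpr (dotProduct_self_pos_s6 hu)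
  have ha2 : v ⬝ᵥ v = a ^ 2 := (Real.sq_sqrt (dotProduct_self_nonneg_s6 v)).symm
  have hb2 : u ⬝ᵥ u = b ^ 2 := (Real.sq_sqrt (dotProduct_self_nonneg_s6 u)).symm
  -- polarization: compare `‖A(au + bv)‖²` from below with `‖A(au - bv)‖²` from above
  have hlo := (hA _ (hcomb a b)).1
  have hhi := (hA _ (hcomb a (-b))).2
  simp only [mulVec_add, mulVec_smul, add_dotProduct, dotProduct_add, smul_dotProduct,
    dotProduct_smul, smul_eq_mul, dotProduct_comm v u, dotProduct_comm (A *ᵥ v) (A *ᵥ u),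
    ha2, hb2] at hlo hhi
  have : 4 * a * b * (u ⬝ᵥ v - δ * b * a) ≤ 4 * a * b * ((A *ᵥ u) ⬝ᵥ (A *ᵥ v)) := by
    linarith
  exact le_of_mul_le_mul_left this (by positivity)

theorem le_dotProduct_mulVec_self_sub [DecidableEq κ] {s : ℕ} (hA : HasRIP A (s + 1) δ)
    (hδ : 0 ≤ δ) {u : κ → ℝ} (hu : (support u).ncard ≤ s) {j : κ} (hj : u j = 0) {t : ℝ}
    (ht : t ^ 2 ≤ s * (u ⬝ᵥ u)) :
    (1 - δ * √(s + 1)) * (u ⬝ᵥ u) ≤ (A *ᵥ u) ⬝ᵥ (A *ᵥ u) - t * ((A *ᵥ u) ᵥ* A) j := by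
  set v := u - t • Pi.single j (1 : ℝ)
  have hsupp : support u ∪ support v ⊆ insert j (support u) := by
    refine Set.union_subset (Set.subset_insert _ _) ((support_sub _ _).trans ?_)
    refine Set.union_subset (Set.subset_insert _ _)
      ((support_smul_subset_right _ _).trans ((Pi.support_single_subset).trans ?_))
    simp
  have hcard : (support u ∪ support v).ncard ≤ s + 1 :=
    (Set.ncard_le_ncard hsupp (Set.toFinite _)).trans ((Set.ncard_insert_le _ _).trans (by omega))
  have huv : u ⬝ᵥ v = u ⬝ᵥ u := by simp [v, dotProduct_sub, dotProduct_single, hj]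
  have hvv : v ⬝ᵥ v = u ⬝ᵥ u + t ^ 2 := by
    simp [v, dotProduct_sub, sub_dotProduct, dotProduct_single, single_dotProduct, hj, sq]
  have hAv : (A *ᵥ u) ⬝ᵥ (A *ᵥ v) = (A *ᵥ u) ⬝ᵥ (A *ᵥ u) - t * ((A *ᵥ u) ᵥ* A) j := by
    rw [mulVec_sub, mulVec_smul, dotProduct_sub, dotProduct_smul, dotProduct_mulVec_single_one,
      smul_eq_mul]
  have hsqrt : √(v ⬝ᵥ v) ≤ √(s + 1) * √(u ⬝ᵥ u) := by
    rw [← Real.sqrt_mul (by positivity)]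
    exact Real.sqrt_le_sqrt (by rw [hvv]; linarith)
  calc (1 - δ * √(s + 1)) * (u ⬝ᵥ u)
      = u ⬝ᵥ v - δ * √(u ⬝ᵥ u) * (√(s + 1) * √(u ⬝ᵥ u)) := by
        rw [huv, mul_mul_mul_comm, Real.mul_self_sqrt (dotProduct_self_nonneg_s6 u)]; ring
    _ ≤ u ⬝ᵥ v - δ * √(u ⬝ᵥ u) * √(v ⬝ᵥ v) := by gcongr
    _ ≤ _ := hAv ▸ hA.sub_mul_sqrt_le_dotProduct hcard

theorem abs_vecMul_lt_of_apply_eq_zero {s : ℕ} (hA : HasRIP A (s + 1) δ) (hδ₀ : 0 ≤ δ)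
    (hδ : δ * √(s + 1) < 1) {u : κ → ℝ} (hu0 : u ≠ 0) (hu : (support u).ncard ≤ s) {α : ℝ}
    (hα : ∀ k ∈ support u, |((A *ᵥ u) ᵥ* A) k| ≤ α) {j : κ} (hj : u j = 0) :
    |((A *ᵥ u) ᵥ* A) j| < α := by
  classical
  set L := ∑ k, |u k|
  obtain ⟨k, hk⟩ := ne_iff.mp hu0
  have hL : 0 < L :=
    Finset.sum_pos' (fun _ _ => abs_nonneg _) ⟨k, Finset.mem_univ _, abs_pos.mpr hk⟩
  obtain ⟨σ, hσ2, hσ⟩ : ∃ σ : ℝ, σ ^ 2 = 1 ∧ σ * ((A *ᵥ u) ᵥ* A) j = |((A *ᵥ u) ᵥ* A) j| := by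
    rcases abs_choice (((A *ᵥ u) ᵥ* A) j) with h | h
    · exact ⟨1, by norm_num, by rw [h, one_mul]⟩
    · exact ⟨-1, by norm_num, by rw [h, neg_one_mul]⟩
  have hlow := hA.le_dotProduct_mulVec_self_sub hδ₀ hu hj (t := L * σ) (by
    rw [mul_pow, hσ2, mul_one]
    exact (sq_sum_abs_le_ncard_support_mul u).trans
      (by gcongr; exact dotProduct_self_nonneg_s6 u))
  have hup : (A *ᵥ u) ⬝ᵥ (A *ᵥ u) ≤ L * α := by
    rw [dotProduct_mulVec]; exact dotProduct_le_sum_abs_mul hα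
  have hpos : 0 < (1 - δ * √(s + 1)) * (u ⬝ᵥ u) :=
    mul_pos (sub_pos.mpr hδ) (dotProduct_self_pos_s6 hu0)
  rw [mul_assoc, hσ] at hlow
  exact lt_of_mul_lt_mul_left (by linarith) hL.le

end HasRIP

theorem omp_induction_step_general (s m N : ℕ)
    (A : Matrix (Fin m) (Fin N) ℝ) (δ : ℝ) (hδ : δ < 1 / Real.sqrt ((s : ℝ) + 1))
    (hRIP : ∀ y : Fin N → ℝ, (Function.support y).ncard ≤ s + 1 →
      (1 - δ) * (y ⬝ᵥ y) ≤ (A *ᵥ y) ⬝ᵥ (A *ᵥ y) ∧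
        (A *ᵥ y) ⬝ᵥ (A *ᵥ y) ≤ (1 + δ) * (y ⬝ᵥ y))
    (x : Fin N → ℝ) (hsupp : (Function.support x).ncard ≤ s)
    (Ω : Set (Fin N)) (hΩ : Ω ⊂ Function.support x)
    (p : Fin m → ℝ)
    (hpmem : p ∈ Submodule.span ℝ ((fun i => A *ᵥ (Pi.single i 1 : Fin N → ℝ)) '' Ω))
    (hporth : ∀ v ∈ Submodule.span ℝ ((fun i => A *ᵥ (Pi.single i 1 : Fin N → ℝ)) '' Ω),
      (A *ᵥ x - p) ⬝ᵥ v = 0)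
    (r : Fin m → ℝ) (hr : r = A *ᵥ x - p) :
    r ≠ 0 ∧
    (∀ i ∈ Ω, r ⬝ᵥ (A *ᵥ (Pi.single i 1 : Fin N → ℝ)) = 0) ∧
    (∀ j : Fin N, j ∉ Function.support x →
      |r ⬝ᵥ (A *ᵥ (Pi.single j 1 : Fin N → ℝ))| <
        ⨆ k : Function.support x,
          |r ⬝ᵥ (A *ᵥ (Pi.single (k : Fin N) 1 : Fin N → ℝ))|) ∧
    ∀ j : Fin N,
      (∀ k : Fin N, |r ⬝ᵥ (A *ᵥ (Pi.single k 1 : Fin N → ℝ))| ≤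
          |r ⬝ᵥ (A *ᵥ (Pi.single j 1 : Fin N → ℝ))|) →
      j ∈ Function.support x \ Ω := by
  have hΩr : ∀ i ∈ Ω, r ⬝ᵥ (A *ᵥ Pi.single i 1) = 0 := fun i hi =>
    hr ▸ hporth _ (Submodule.subset_span ⟨i, hi, rfl⟩)
  obtain ⟨u, hpu, hux, hu0⟩ := exists_sub_eq_mulVec_of_mem_span hΩ hpmem
  subst hr
  rw [hpu] at hΩr ⊢
  simp only [dotProduct_mulVec_single_one] at hΩr ⊢
  have hu : (support u).ncard ≤ s := (Set.ncard_le_ncard hux (Set.toFinite _)).trans hsupp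
  set δ' := max δ 0
  have hA : HasRIP A (s + 1) δ' := HasRIP.mono hRIP (le_max_left δ 0)
  have hδ' : δ' * √(s + 1) < 1 := (lt_div_iff₀ (by positivity)).mp (max_lt hδ (by positivity))
  have hδ'1 : δ' < 1 := hδ'.trans_le' (le_mul_of_one_le_right (le_max_right δ 0)
    (Real.one_le_sqrt.mpr (by linarith [s.cast_nonneg (α := ℝ)])))
  have hpos := hA.dotProduct_mulVec_self_pos hδ'1 (hu.trans s.le_succ) hu0
  have : Nonempty (support x) := (Set.nonempty_of_ssubset' hΩ).to_subtype
  set g := (A *ᵥ u) ᵥ* A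
  have hle : ∀ k ∈ support x, |g k| ≤ ⨆ k : support x, |g k| := fun k hk =>
    le_ciSup (f := fun k : support x => |g k|) (Set.finite_range _).bddAbove ⟨k, hk⟩
  have hlt : ∀ j ∉ support x, |g j| < ⨆ k : support x, |g k| := fun j hj =>
    hA.abs_vecMul_lt_of_apply_eq_zero (le_max_right δ 0) hδ' hu0 hu (fun k hk => hle k (hux hk))
      (notMem_support.mp fun h => hj (hux h))
  refine ⟨fun h0 => by simp [h0] at hpos, hΩr, hlt, fun j hj => ⟨?_, fun hjΩ => hpos.ne' ?_⟩⟩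
  · by_contra hjx
    exact (hlt j hjx).not_ge (ciSup_le fun k => hj k)
  · have hg : g = 0 := funext fun k => abs_nonpos_iff.mp ((hj k).trans_eq (by simp [hΩr j hjΩ]))
    rw [dotProduct_mulVec]
    change g ⬝ᵥ u = 0
    rw [hg, zero_dotProduct]

/-- Let `A` satisfy the RIP of order `s+1` with `δ < 1/√(s+1)`, let `x` be
`s`-sparse, let `Ω ⊊ supp(x)`, and let `r = Ax − P(Ax)` where `P` is the orthogonal
projection onto the span of the columns `{A e_i : i ∈ Ω}` (characterized here by
`p ∈ span` and `Ax − p ⊥ span`).  Then `r ≠ 0`, `⟨r, A e_i⟩ = 0` for `i ∈ Ω`,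
`max_{k ∈ supp(x)} |⟨r, A e_k⟩| > |⟨r, A e_j⟩|` for every `j ∉ supp(x)`, and every
maximizer of `|⟨r, A e_k⟩|` lies in `supp(x) \ Ω`. -/
theorem omp_induction_step (s m N : ℕ) (hs : 0 < s)
    (A : Matrix (Fin m) (Fin N) ℝ) (δ : ℝ) (hδ : δ < 1 / Real.sqrt ((s : ℝ) + 1))
    (hRIP : ∀ y : Fin N → ℝ, (Function.support y).ncard ≤ s + 1 →
      (1 - δ) * (y ⬝ᵥ y) ≤ (A *ᵥ y) ⬝ᵥ (A *ᵥ y) ∧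
        (A *ᵥ y) ⬝ᵥ (A *ᵥ y) ≤ (1 + δ) * (y ⬝ᵥ y))
    (x : Fin N → ℝ) (hsupp : (Function.support x).ncard ≤ s)
    (Ω : Set (Fin N)) (hΩ : Ω ⊂ Function.support x)
    (p : Fin m → ℝ)
    (hpmem : p ∈ Submodule.span ℝ ((fun i => A *ᵥ (Pi.single i 1 : Fin N → ℝ)) '' Ω))
    (hporth : ∀ v ∈ Submodule.span ℝ ((fun i => A *ᵥ (Pi.single i 1 : Fin N → ℝ)) '' Ω),
      (A *ᵥ x - p) ⬝ᵥ v = 0)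
    (r : Fin m → ℝ) (hr : r = A *ᵥ x - p) :
    r ≠ 0 ∧
    (∀ i ∈ Ω, r ⬝ᵥ (A *ᵥ (Pi.single i 1 : Fin N → ℝ)) = 0) ∧
    (∀ j : Fin N, j ∉ Function.support x →
      |r ⬝ᵥ (A *ᵥ (Pi.single j 1 : Fin N → ℝ))| <
        ⨆ k : Function.support x,
          |r ⬝ᵥ (A *ᵥ (Pi.single (k : Fin N) 1 : Fin N → ℝ))|) ∧
    ∀ j : Fin N,
      (∀ k : Fin N, |r ⬝ᵥ (A *ᵥ (Pi.single k 1 : Fin N → ℝ))| ≤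
          |r ⬝ᵥ (A *ᵥ (Pi.single j 1 : Fin N → ℝ))|) →
      j ∈ Function.support x \ Ω :=
  omp_induction_step_general s m N A δ hδ hRIP x hsupp Ω hΩ p hpmem hporth r hr
end

section
/- Let s be a positive integer and let A be the (s+1)×(s+1) real matrix whose upper-left s×s block is √(s/(s+1))·I_s, whose entries in the last column are A_{k,s+1} = 1/√(s(s+1)) for k = 1,…,s and A_{s+1,s+1} = 1, and whose remaining entries (the first s entries of the last row) are 0. Then for every x ∈ ℝ^{s+1}, (1 − 1/√(s+1))‖x‖₂² ≤ ‖Ax‖₂² ≤ (1 + 1/√(s+1))‖x‖₂²; that is, A satisfies the restricted isometry property of order s+1 with constant 1/√(s+1). -/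
/-!
Write `x = (u, t)` with `u ∈ ℝ^s`. Then `‖Ax‖² = (s‖u‖² + 2t·Σu + (s+2)t²)/(s+1)`, and
Cauchy–Schwarz gives `(Σu)² ≤ s‖u‖²`. With `r = √(s+1)`, so that `s = (r-1)(r+1)`, AM–GM bounds
the cross term in two ways, `|2t·Σu| ≤ (r-1)‖u‖² + (r+1)t²` and `|2t·Σu| ≤ (r+1)‖u‖² + (r-1)t²`,
which are exactly the lower and the upper isometry bound.
-/

open Matrix

def ompExampleMatrix (s : ℕ) (a b : ℝ) : Matrix (Fin (s + 1)) (Fin (s + 1)) ℝ :=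
  of fun i j => if (j : ℕ) < s then (if i = j then a else 0) else (if (i : ℕ) < s then b else 1)

theorem dotProduct_self_eq_sum_castSucc_add {R : Type*} [CommSemiring R] {n : ℕ}
    (y : Fin (n + 1) → R) :
    y ⬝ᵥ y = ∑ i : Fin n, y i.castSucc ^ 2 + y (Fin.last n) ^ 2 := by
  simp only [dotProduct, Fin.sum_univ_castSucc, sq]

section ompExampleMatrix

variable {s : ℕ} (a b : ℝ) (x : Fin (s + 1) → ℝ)

theorem ompExampleMatrix_mulVec_castSucc (i : Fin s) :
    (ompExampleMatrix s a b *ᵥ x) i.castSucc = a * x i.castSucc + b * x (Fin.last s) := by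
  simp [ompExampleMatrix, mulVec, dotProduct, Fin.sum_univ_castSucc, Fin.castSucc_inj]

theorem ompExampleMatrix_mulVec_last :
    (ompExampleMatrix s a b *ᵥ x) (Fin.last s) = x (Fin.last s) := by
  simp [ompExampleMatrix, mulVec, dotProduct, Fin.sum_univ_castSucc,
    (Fin.castSucc_lt_last _).ne']

theorem ompExampleMatrix_mulVec_dotProduct_self :
    (ompExampleMatrix s a b *ᵥ x) ⬝ᵥ (ompExampleMatrix s a b *ᵥ x) =
      a ^ 2 * ∑ i : Fin s, x i.castSucc ^ 2
        + 2 * (a * b) * x (Fin.last s) * ∑ i : Fin s, x i.castSucc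
        + s * b ^ 2 * x (Fin.last s) ^ 2 + x (Fin.last s) ^ 2 := by
  have expand (i : Fin s) : (a * x i.castSucc + b * x (Fin.last s)) ^ 2 =
      a ^ 2 * x i.castSucc ^ 2 + 2 * (a * b) * x (Fin.last s) * x i.castSucc
        + b ^ 2 * x (Fin.last s) ^ 2 := by ring
  simp only [dotProduct_self_eq_sum_castSucc_add, ompExampleMatrix_mulVec_castSucc,
    ompExampleMatrix_mulVec_last, expand, Finset.sum_add_distrib, ← Finset.mul_sum,
    Finset.sum_const, Finset.card_univ, Fintype.card_fin, nsmul_eq_mul]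
  ring

end ompExampleMatrix

theorem ompExample_quadraticForm_eq {s Q S t : ℝ} (hs : 0 < s) :
    √(s / (s + 1)) ^ 2 * Q + 2 * (√(s / (s + 1)) * (1 / √(s * (s + 1)))) * t * S
      + s * (1 / √(s * (s + 1))) ^ 2 * t ^ 2 + t ^ 2
      = (s * Q + 2 * t * S + (s + 2) * t ^ 2) / (s + 1) := by
  have hab : √(s / (s + 1)) * (1 / √(s * (s + 1))) = 1 / (s + 1) := by
    rw [mul_one_div, ← Real.sqrt_div' _ (by positivity),
      show s / (s + 1) / (s * (s + 1)) = (1 / (s + 1)) ^ 2 by field_simp,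
      Real.sqrt_sq (by positivity)]
  rw [hab, div_pow, Real.sq_sqrt (by positivity), one_pow, Real.sq_sqrt (by positivity)]
  field_simp
  ring

theorem two_mul_mul_le_of_sq_le {c d Q S t : ℝ} (hd : 0 < d) (h : S ^ 2 ≤ c * d * Q) :
    2 * t * S ≤ c * Q + d * t ^ 2 := by
  nlinarith [sq_nonneg (S - d * t)]

theorem ompExample_quadraticForm_bounds {s Q S t : ℝ} (hs : 0 < s) (hS : S ^ 2 ≤ s * Q) :
    (1 - 1 / √(s + 1)) * (Q + t ^ 2) ≤ (s * Q + 2 * t * S + (s + 2) * t ^ 2) / (s + 1) ∧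
      (s * Q + 2 * t * S + (s + 2) * t ^ 2) / (s + 1) ≤ (1 + 1 / √(s + 1)) * (Q + t ^ 2) := by
  set r := √(s + 1)
  have hr2 : r ^ 2 = s + 1 := Real.sq_sqrt (by linarith)
  have hr : 1 < r := Real.lt_sqrt_of_sq_lt (by linarith)
  have hs' : s = (r - 1) * (r + 1) := by linarith
  have hS' : S ^ 2 ≤ (r - 1) * (r + 1) * Q := hs' ▸ hS
  have lower := two_mul_mul_le_of_sq_le (t := -t) (by linarith : 0 < r + 1) hS'
  have upper := two_mul_mul_le_of_sq_le (t := t) (by linarith : 0 < r - 1)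
    (by rwa [mul_comm (r + 1)])
  rw [← hr2]
  constructor
  · rw [le_div_iff₀ (by positivity)]
    field_simp
    rw [hs']
    linarith
  · rw [div_le_iff₀ (by positivity)]
    field_simp
    rw [hs']
    linarith

/-- For the `(s+1)×(s+1)` matrix `A` with upper-left block `√(s/(s+1))·I_s`,
last column `(1/√(s(s+1)), …, 1/√(s(s+1)), 1)ᵀ` and zeros in the first `s` entries of the
last row, every `x ∈ ℝ^{s+1}` satisfies
`(1 − 1/√(s+1))‖x‖₂² ≤ ‖Ax‖₂² ≤ (1 + 1/√(s+1))‖x‖₂²`, i.e. `A` satisfies the RIP of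
order `s+1` with constant `1/√(s+1)`. -/
theorem omp_example_rip (s : ℕ) (hs : 0 < s)
    (A : Matrix (Fin (s + 1)) (Fin (s + 1)) ℝ)
    (hA : ∀ i j : Fin (s + 1), A i j =
      if (j : ℕ) < s then (if i = j then Real.sqrt ((s : ℝ) / ((s : ℝ) + 1)) else 0)
      else (if (i : ℕ) < s then 1 / Real.sqrt ((s : ℝ) * ((s : ℝ) + 1)) else 1)) :
    ∀ x : Fin (s + 1) → ℝ,
      (1 - 1 / Real.sqrt ((s : ℝ) + 1)) * (x ⬝ᵥ x) ≤ (A *ᵥ x) ⬝ᵥ (A *ᵥ x) ∧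
      (A *ᵥ x) ⬝ᵥ (A *ᵥ x) ≤ (1 + 1 / Real.sqrt ((s : ℝ) + 1)) * (x ⬝ᵥ x) := by
  intro x
  obtain rfl : A = ompExampleMatrix s √((s : ℝ) / (s + 1)) (1 / √((s : ℝ) * (s + 1))) :=
    Matrix.ext hA
  have hs' : (0 : ℝ) < s := by exact_mod_cast hs
  have cauchySchwarz :=
    sq_sum_le_card_mul_sum_sq (s := Finset.univ) (f := fun i : Fin s ↦ x i.castSucc)
  rw [Finset.card_univ, Fintype.card_fin] at cauchySchwarz
  rw [ompExampleMatrix_mulVec_dotProduct_self, dotProduct_self_eq_sum_castSucc_add,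
    ompExample_quadraticForm_eq hs']
  exact ompExample_quadraticForm_bounds hs' cauchySchwarz
end

section
/- Let s be a positive integer and let A be the (s+1)×(s+1) real matrix whose upper-left s×s block is √(s/(s+1))·I_s, whose entries in the last column are A_{k,s+1} = 1/√(s(s+1)) for k = 1,…,s and A_{s+1,s+1} = 1, and whose remaining entries (the first s entries of the last row) are 0. Then for the nonzero vector u = (1, 1, …, 1, 1 − √(s+1))ᵀ ∈ ℝ^{s+1}, one has ‖A u‖₂² = (1 − 1/√(s+1))·‖u‖₂². Consequently, there is no constant δ < 1/√(s+1) such that (1−δ)‖x‖₂² ≤ ‖Ax‖₂² holds for all x ∈ ℝ^{s+1}; that is, the restricted isometry constant δ_{s+1}(A) is exactly 1/√(s+1). -/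
/-!
Both `A` and `u` are constant on the first `s` coordinates, and `A` preserves that shape:
with `t = √(s+1)` one finds `A u = ((t-1)/√s, …, (t-1)/√s, 1-t)`. Hence
`‖A u‖² = 2(t-1)²` and `‖u‖² = 2t(t-1)`, whose ratio is `1 - 1/t`, and testing the
lower RIP inequality on `u` forces `δ ≥ 1/t`.
-/

open Matrix

section SnocConst

variable {R : Type*}

def snocConst (s : ℕ) (p q : R) : Fin (s + 1) → R := fun k => if (k : ℕ) < s then p else q

@[simp]
lemma snocConst_castSucc (s : ℕ) (p q : R) (k : Fin s) : snocConst s p q k.castSucc = p := by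
  simp [snocConst]

@[simp]
lemma snocConst_last (s : ℕ) (p q : R) : snocConst s p q (Fin.last s) = q := by
  simp [snocConst]

lemma snocConst_dotProduct_snocConst [Semiring R] (s : ℕ) (p q p' q' : R) :
    snocConst s p q ⬝ᵥ snocConst s p' q' = s * (p * p') + q * q' := by
  simp [dotProduct, Fin.sum_univ_castSucc]

lemma snocConst_ne_zero [Zero R] {s : ℕ} (hs : 0 < s) {p : R} (hp : p ≠ 0) (q : R) :
    snocConst s p q ≠ 0 := fun h =>
  hp <| by simpa [snocConst, hs] using congr_fun h ⟨0, by omega⟩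

lemma mulVec_snocConst [Semiring R] {s : ℕ} {A : Matrix (Fin (s + 1)) (Fin (s + 1)) R}
    {α β γ : R}
    (hA : ∀ i j : Fin (s + 1), A i j =
      if (j : ℕ) < s then (if i = j then α else 0) else (if (i : ℕ) < s then β else γ))
    (p q : R) :
    A *ᵥ snocConst s p q = snocConst s (α * p + β * q) (γ * q) := by
  ext i
  induction i using Fin.lastCases with
  | last => simp [mulVec, dotProduct, Fin.sum_univ_castSucc, hA, (Fin.castSucc_lt_last _).ne']
  | cast i => simp [mulVec, dotProduct, Fin.sum_univ_castSucc, hA, Fin.castSucc_inj]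

end SnocConst

lemma le_of_dotProduct_mulVec_self_eq {m n : Type*} [Fintype m] [Fintype n]
    {A : Matrix m n ℝ} {u : n → ℝ} (hu : u ≠ 0) {c δ : ℝ}
    (hAu : (A *ᵥ u) ⬝ᵥ (A *ᵥ u) = (1 - c) * (u ⬝ᵥ u))
    (hδ : (1 - δ) * (u ⬝ᵥ u) ≤ (A *ᵥ u) ⬝ᵥ (A *ᵥ u)) : c ≤ δ := by
  have hpos : 0 < u ⬝ᵥ u :=
    (Finset.sum_nonneg fun i _ => mul_self_nonneg (u i)).lt_of_ne'
      (dotProduct_self_eq_zero.not.2 hu)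
  rw [hAu] at hδ
  linarith [le_of_mul_le_mul_right hδ hpos]

lemma sqrt_div_add_sub_sqrt_div_sqrt_mul {s : ℝ} (hs : 0 < s) :
    √(s / (s + 1)) + (1 - √(s + 1)) / √(s * (s + 1)) = (√(s + 1) - 1) / √s := by
  have ha : 0 < √s := Real.sqrt_pos.2 hs
  have ht : 0 < √(s + 1) := Real.sqrt_pos.2 (by linarith)
  rw [Real.sqrt_div hs.le, Real.sqrt_mul hs.le]
  field_simp
  linear_combination Real.sq_sqrt hs.le - Real.sq_sqrt (by linarith : 0 ≤ s + 1)

/-- For the `(s+1)×(s+1)` matrix `A` with upper-left block `√(s/(s+1))·I_s`,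
last column `(1/√(s(s+1)), …, 1/√(s(s+1)), 1)ᵀ` and zeros in the first `s` entries of the
last row, the nonzero vector `u = (1, …, 1, 1 − √(s+1))ᵀ` satisfies
`‖Au‖₂² = (1 − 1/√(s+1))‖u‖₂²`; consequently no `δ < 1/√(s+1)` satisfies the lower RIP
inequality for all `x`, so `δ_{s+1}(A) = 1/√(s+1)`. -/
theorem omp_example_rip_sharp (s : ℕ) (hs : 0 < s)
    (A : Matrix (Fin (s + 1)) (Fin (s + 1)) ℝ)
    (hA : ∀ i j : Fin (s + 1), A i j =
      if (j : ℕ) < s then (if i = j then Real.sqrt ((s : ℝ) / ((s : ℝ) + 1)) else 0)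
      else (if (i : ℕ) < s then 1 / Real.sqrt ((s : ℝ) * ((s : ℝ) + 1)) else 1))
    (u : Fin (s + 1) → ℝ)
    (hu : u = fun k : Fin (s + 1) =>
      if (k : ℕ) < s then 1 else 1 - Real.sqrt ((s : ℝ) + 1)) :
    u ≠ 0 ∧
    (A *ᵥ u) ⬝ᵥ (A *ᵥ u) = (1 - 1 / Real.sqrt ((s : ℝ) + 1)) * (u ⬝ᵥ u) ∧
    ∀ δ : ℝ,
      (∀ x : Fin (s + 1) → ℝ, (1 - δ) * (x ⬝ᵥ x) ≤ (A *ᵥ x) ⬝ᵥ (A *ᵥ x)) →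
      1 / Real.sqrt ((s : ℝ) + 1) ≤ δ := by
  change u = snocConst s 1 (1 - √((s : ℝ) + 1)) at hu
  have hu0 : u ≠ 0 := hu ▸ snocConst_ne_zero hs one_ne_zero _
  have hAu : (A *ᵥ u) ⬝ᵥ (A *ᵥ u) = (1 - 1 / √((s : ℝ) + 1)) * (u ⬝ᵥ u) := by
    rw [hu, mulVec_snocConst hA, snocConst_dotProduct_snocConst, snocConst_dotProduct_snocConst]
    have hs' : (0 : ℝ) < s := by exact_mod_cast hs
    rw [mul_one, one_div_mul_eq_div, sqrt_div_add_sub_sqrt_div_sqrt_mul hs']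
    have ht : 0 < √((s : ℝ) + 1) := Real.sqrt_pos.2 (by linarith)
    rw [div_mul_div_comm, mul_div_assoc', Real.mul_self_sqrt hs'.le,
      mul_div_cancel_left₀ _ hs'.ne']
    field_simp
    linear_combination (√((s : ℝ) + 1) - 1) * Real.sq_sqrt (by linarith : (0 : ℝ) ≤ s + 1)
  exact ⟨hu0, hAu, fun δ hδ => le_of_dotProduct_mulVec_self_eq hu0 hAu (hδ u)⟩
end

section
/- For every positive integer s there exist a matrix A ∈ ℝ^{(s+1)×(s+1)} and an s-sparse vector x ∈ ℝ^{s+1} such that: (i) A satisfies the restricted isometry property of order s+1 with constant 1/√(s+1), and no constant δ < 1/√(s+1) satisfies the RIP inequalities of order s+1 for A (so δ_{s+1}(A) = 1/√(s+1)); and (ii) there exists an index j ∉ supp(x) with |⟨Ax, A e_j⟩| = max_{k ∈ {1,…,s+1}} |⟨Ax, A e_k⟩|, so the first greedy index selection of Orthogonal Matching Pursuit applied to b = Ax may choose an index outside the support of x. -/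
/-!
Take `A = I + u aᵀ` with `u = (1, …, 1, 0)` and `a = (g𝟙 - u)/s`. Since `u + s a = g𝟙`, one
gets `A u = g u` and `⟨A u, A e_k⟩ = g (u_k + s a_k) = g²` for every `k`, so all correlations
of `A u` tie, including the one with `e_{s+1} ∉ supp u`. The Gram form of `A` is
`‖y‖² + (g² (∑ y)² - ⟨u, y⟩²)/s`; for `g² = s/(s+1)` its deviation from `‖y‖²` only sees the
coordinates `⟨u, y⟩/√s` and `y_{s+1}`, where it is a `2 × 2` form with eigenvalues
`±1/√(s+1)`, the top one attained at `y = 𝟙 + √(s+1) e_{s+1}`.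
-/
open Matrix

noncomputable section

def headIndicator (s : ℕ) : Fin (s + 1) → ℝ := fun i => if i = Fin.last s then 0 else 1

def ompMatrix (s : ℕ) (g : ℝ) : Matrix (Fin (s + 1)) (Fin (s + 1)) ℝ :=
  1 + vecMulVec (headIndicator s) ((s : ℝ)⁻¹ • (g • 1 - headIndicator s))

end

theorem abs_quadratic_le {s t : ℝ} (hs : 0 ≤ s) (ht : 0 ≤ t) (ht2 : t ^ 2 = s + 1) (S B : ℝ) :
    |s * B ^ 2 + 2 * s * S * B - S ^ 2| ≤ t * (S ^ 2 + s * B ^ 2) := by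
  refine abs_le_of_sq_le_sq ?_ (by positivity)
  have hgap : (t * (S ^ 2 + s * B ^ 2)) ^ 2 - (s * B ^ 2 + 2 * s * S * B - S ^ 2) ^ 2 =
      s * (s * B ^ 2 - 2 * S * B - S ^ 2) ^ 2 := by
    rw [mul_pow, ht2]; ring
  nlinarith [mul_nonneg hs (sq_nonneg (s * B ^ 2 - 2 * S * B - S ^ 2))]

section
variable {s : ℕ}

theorem headIndicator_dotProduct (y : Fin (s + 1) → ℝ) :
    headIndicator s ⬝ᵥ y = ∑ k : Fin s, y k.castSucc := by
  simp [headIndicator, dotProduct, Fin.sum_univ_castSucc, Fin.castSucc_ne_last]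

@[simp]
theorem headIndicator_last : headIndicator s (Fin.last s) = 0 := if_pos rfl

theorem sum_eq_headIndicator_dotProduct_add (y : Fin (s + 1) → ℝ) :
    ∑ i, y i = headIndicator s ⬝ᵥ y + y (Fin.last s) := by
  rw [headIndicator_dotProduct, Fin.sum_univ_castSucc]

theorem headIndicator_dotProduct_self : headIndicator s ⬝ᵥ headIndicator s = s := by
  simp [headIndicator_dotProduct, headIndicator, Fin.castSucc_ne_last]

theorem ncard_support_headIndicator : (Function.support (headIndicator s)).ncard = s := by
  have : Function.support (headIndicator s) = {Fin.last s}ᶜ := by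
    ext i; simp [headIndicator]
  rw [this, Set.ncard_compl, Set.ncard_singleton, Nat.card_eq_fintype_card, Fintype.card_fin,
    Nat.add_sub_cancel]

theorem sq_headIndicator_dotProduct_add_le (y : Fin (s + 1) → ℝ) :
    (headIndicator s ⬝ᵥ y) ^ 2 + s * y (Fin.last s) ^ 2 ≤ s * (y ⬝ᵥ y) := by
  have hCS := sq_sum_le_card_mul_sum_sq (s := Finset.univ) (f := fun k : Fin s => y k.castSucc)
  simp only [Finset.card_univ, Fintype.card_fin] at hCS
  rw [headIndicator_dotProduct, dotProduct, Fin.sum_univ_castSucc]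
  simp only [← sq]
  linarith

theorem ompMatrix_mulVec (g : ℝ) (y : Fin (s + 1) → ℝ) :
    ompMatrix s g *ᵥ y = y + ((g * ∑ i, y i - headIndicator s ⬝ᵥ y) / s) • headIndicator s := by
  rw [ompMatrix, add_mulVec, one_mulVec, vecMulVec_mulVec, op_smul_eq_smul, smul_dotProduct,
    sub_dotProduct, smul_dotProduct, one_dotProduct, smul_eq_mul, smul_eq_mul, div_eq_inv_mul]

theorem ompMatrix_mulVec_dotProduct_self (hs : s ≠ 0) (g : ℝ) (y : Fin (s + 1) → ℝ) :
    (ompMatrix s g *ᵥ y) ⬝ᵥ (ompMatrix s g *ᵥ y) =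
      y ⬝ᵥ y + (g ^ 2 * (∑ i, y i) ^ 2 - (headIndicator s ⬝ᵥ y) ^ 2) / s := by
  have hs' : (s : ℝ) ≠ 0 := Nat.cast_ne_zero.2 hs
  simp only [ompMatrix_mulVec, add_dotProduct, dotProduct_add, smul_dotProduct, dotProduct_smul,
    headIndicator_dotProduct_self, dotProduct_comm (headIndicator s) y, smul_eq_mul]
  field_simp
  ring

theorem ompMatrix_mulVec_headIndicator (hs : s ≠ 0) (g : ℝ) :
    ompMatrix s g *ᵥ headIndicator s = g • headIndicator s := by
  have hs' : (s : ℝ) ≠ 0 := Nat.cast_ne_zero.2 hs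
  rw [ompMatrix_mulVec, sum_eq_headIndicator_dotProduct_add, headIndicator_dotProduct_self,
    headIndicator_last, add_zero, show (g * s - s) / s = g - 1 by field_simp, sub_smul, one_smul,
    add_sub_cancel]

theorem ompMatrix_correlation (hs : s ≠ 0) (g : ℝ) (k : Fin (s + 1)) :
    (ompMatrix s g *ᵥ headIndicator s) ⬝ᵥ (ompMatrix s g *ᵥ Pi.single k 1) = g ^ 2 := by
  have hs' : (s : ℝ) ≠ 0 := Nat.cast_ne_zero.2 hs
  rw [ompMatrix_mulVec_headIndicator hs, ompMatrix_mulVec, smul_dotProduct, dotProduct_add,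
    dotProduct_smul, headIndicator_dotProduct_self,
    dotProduct_single, Fintype.sum_pi_single', smul_eq_mul, smul_eq_mul]
  field_simp
  ring

theorem ompMatrix_rip (hs : s ≠ 0) (y : Fin (s + 1) → ℝ) :
    |(ompMatrix s √(s / (s + 1)) *ᵥ y) ⬝ᵥ (ompMatrix s √(s / (s + 1)) *ᵥ y) - y ⬝ᵥ y| ≤
      1 / √(s + 1) * (y ⬝ᵥ y) := by
  have hs' : (0 : ℝ) < s := Nat.cast_pos.2 (Nat.pos_of_ne_zero hs)
  set t := √((s : ℝ) + 1)
  have ht : 0 < t := by positivity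
  have ht2 : t ^ 2 = s + 1 := Real.sq_sqrt (by positivity)
  rw [ompMatrix_mulVec_dotProduct_self hs, add_sub_cancel_left, sum_eq_headIndicator_dotProduct_add,
    Real.sq_sqrt (by positivity)]
  set S := headIndicator s ⬝ᵥ y
  set B := y (Fin.last s)
  have hCS := sq_headIndicator_dotProduct_add_le y
  have hdefect : (s / (s + 1) * (S + B) ^ 2 - S ^ 2) / s =
      (s * B ^ 2 + 2 * s * S * B - S ^ 2) / (s * t ^ 2) := by
    rw [ht2]; field_simp; ring
  calc |(s / (s + 1) * (S + B) ^ 2 - S ^ 2) / s|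
      = |s * B ^ 2 + 2 * s * S * B - S ^ 2| / (s * t ^ 2) := by
        rw [hdefect, abs_div, abs_of_pos (by positivity : (0 : ℝ) < s * t ^ 2)]
    _ ≤ t * (S ^ 2 + s * B ^ 2) / (s * t ^ 2) := by
        gcongr; exact abs_quadratic_le hs'.le ht.le ht2 S B
    _ ≤ t * (s * (y ⬝ᵥ y)) / (s * t ^ 2) := by gcongr
    _ = 1 / t * (y ⬝ᵥ y) := by field_simp

theorem exists_ompMatrix_extremal (hs : s ≠ 0) :
    ∃ y : Fin (s + 1) → ℝ, 0 < y ⬝ᵥ y ∧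
      (ompMatrix s √(s / (s + 1)) *ᵥ y) ⬝ᵥ (ompMatrix s √(s / (s + 1)) *ᵥ y) =
        (1 + 1 / √(s + 1)) * (y ⬝ᵥ y) := by
  have hs' : (0 : ℝ) < s := Nat.cast_pos.2 (Nat.pos_of_ne_zero hs)
  set t := √((s : ℝ) + 1)
  have ht : 0 < t := by positivity
  have ht2 : t ^ 2 = s + 1 := Real.sq_sqrt (by positivity)
  set y : Fin (s + 1) → ℝ := 1 + t • Pi.single (Fin.last s) 1
  have hS : headIndicator s ⬝ᵥ y = s := by simp [y, headIndicator_dotProduct]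
  have hB : y (Fin.last s) = 1 + t := by simp [y]
  have hyy : y ⬝ᵥ y = s + (1 + t) ^ 2 := by
    simp [y, dotProduct, Fin.sum_univ_castSucc, Fin.castSucc_ne_last, sq]
  refine ⟨y, by rw [hyy]; positivity, ?_⟩
  rw [ompMatrix_mulVec_dotProduct_self hs, sum_eq_headIndicator_dotProduct_add, hS, hB, hyy,
    Real.sq_sqrt (by positivity)]
  have hst : (s : ℝ) = t ^ 2 - 1 := by linarith
  have hst0 : t ^ 2 - 1 ≠ 0 := hst ▸ hs'.ne'
  rw [← ht2, hst]
  field_simp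
  ring

end

/-- Theorem 2: For every positive integer `s` there exist a matrix
`A ∈ ℝ^{(s+1)×(s+1)}` and an `s`-sparse vector `x ∈ ℝ^{s+1}` such that (i) `A` satisfies
the RIP of order `s+1` with constant `1/√(s+1)` and no smaller constant works, i.e.
`δ_{s+1}(A) = 1/√(s+1)`; and (ii) some index `j ∉ supp(x)` attains the maximum of
`|⟨Ax, A e_k⟩|`, so the first greedy step of OMP applied to `b = Ax` may choose an index
outside the support of `x`. -/
theorem omp_sharpness (s : ℕ) (hs : 0 < s) :
    ∃ (A : Matrix (Fin (s + 1)) (Fin (s + 1)) ℝ) (x : Fin (s + 1) → ℝ),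
      (Function.support x).ncard ≤ s ∧
      (∀ y : Fin (s + 1) → ℝ, (Function.support y).ncard ≤ s + 1 →
        (1 - 1 / Real.sqrt ((s : ℝ) + 1)) * (y ⬝ᵥ y) ≤ (A *ᵥ y) ⬝ᵥ (A *ᵥ y) ∧
          (A *ᵥ y) ⬝ᵥ (A *ᵥ y) ≤ (1 + 1 / Real.sqrt ((s : ℝ) + 1)) * (y ⬝ᵥ y)) ∧
      (∀ δ : ℝ,
        (∀ y : Fin (s + 1) → ℝ, (Function.support y).ncard ≤ s + 1 →
          (1 - δ) * (y ⬝ᵥ y) ≤ (A *ᵥ y) ⬝ᵥ (A *ᵥ y) ∧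
            (A *ᵥ y) ⬝ᵥ (A *ᵥ y) ≤ (1 + δ) * (y ⬝ᵥ y)) →
        1 / Real.sqrt ((s : ℝ) + 1) ≤ δ) ∧
      ∃ j : Fin (s + 1), j ∉ Function.support x ∧
        ∀ k : Fin (s + 1),
          |(A *ᵥ x) ⬝ᵥ (A *ᵥ (Pi.single k 1 : Fin (s + 1) → ℝ))| ≤
            |(A *ᵥ x) ⬝ᵥ (A *ᵥ (Pi.single j 1 : Fin (s + 1) → ℝ))| := by
  refine ⟨ompMatrix s √(s / (s + 1)), headIndicator s, ncard_support_headIndicator.le,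
    fun y _ => ?_, fun δ hδ => ?_, Fin.last s, by simp, fun k => ?_⟩
  · have hrip := abs_le.1 (ompMatrix_rip hs.ne' y)
    constructor <;> linarith
  · obtain ⟨y, hy_pos, hy_eq⟩ := exists_ompMatrix_extremal hs.ne'
    have hsparse : (Function.support y).ncard ≤ s + 1 := by
      simpa using Set.ncard_le_card (Function.support y)
    have hupper := hy_eq ▸ (hδ y hsparse).2
    linarith [le_of_mul_le_mul_right hupper hy_pos]
  · rw [ompMatrix_correlation hs.ne', ompMatrix_correlation hs.ne']
end
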